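/- For parameters p = (a₀,a₁,a₂,a₅,b₀,b₁,b₃) ∈ ℂ⁷ set g(p) = b₀x₀² + b₁x₀x₁ + x₀x₂ + b₃x₁² and f(p) = (a₀x₀ + a₁x₁ + a₂x₂ + x₃)x₀² + a₅(b₁x₀x₁² + x₀x₁x₂ + (2/3)b₃x₁³), and let ωᵢ(p) = 3f(p)·∂g(p)/∂xᵢ − 2g(p)·∂f(p)/∂xᵢ for i = 0,…,3. If p, p' ∈ ℂ⁷ and λ ∈ ℂ \ {0} satisfy ωᵢ(p') = λ·ωᵢ(p) for all i, then p = p' (and λ = 1). Hence the map from parameters to the projectivized 1-form ω is injective on the chart b₂ = 1, a₃ = 1; in particular the parametrization Φ of the exceptional component is generically injective. -/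
import Mathlib


open MvPolynomial

/-- The special quadric on the chart `b₂ = 1`. -/
noncomputable def gE (b₀ b₁ b₃ : ℂ) : MvPolynomial (Fin 4) ℂ :=
  C b₀ * X 0 ^ 2 + C b₁ * X 0 * X 1 + X 0 * X 2 + C b₃ * X 1 ^ 2

/-- The special cubic on the chart `b₂ = 1`, `a₃ = 1` (the divisibility
condition being built in). -/
noncomputable def fE (a₀ a₁ a₂ a₅ b₁ b₃ : ℂ) : MvPolynomial (Fin 4) ℂ :=
  (C a₀ * X 0 + C a₁ * X 1 + C a₂ * X 2 + X 3) * X 0 ^ 2 +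
    C a₅ * (C b₁ * X 0 * X 1 ^ 2 + X 0 * X 1 * X 2 +
      C (2/3 : ℂ) * C b₃ * X 1 ^ 3)

/-- The components of the (unreduced) 1-form `3f·dg − 2g·df` attached to the
parameters `(a₀, a₁, a₂, a₅, b₀, b₁, b₃)`. -/
noncomputable def ωE (a₀ a₁ a₂ a₅ b₀ b₁ b₃ : ℂ) (i : Fin 4) :
    MvPolynomial (Fin 4) ℂ :=
  3 * fE a₀ a₁ a₂ a₅ b₁ b₃ * pderiv i (gE b₀ b₁ b₃) -
    2 * gE b₀ b₁ b₃ * pderiv i (fE a₀ a₁ a₂ a₅ b₁ b₃)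

lemma ev3 (a₀ a₁ a₂ a₅ b₀ b₁ b₃ : ℂ) (v : Fin 4 → ℂ) :
    eval v (ωE a₀ a₁ a₂ a₅ b₀ b₁ b₃ 3) =
      -2 * (b₀ * v 0 ^ 2 + b₁ * v 0 * v 1 + v 0 * v 2 + b₃ * v 1 ^ 2) * v 0 ^ 2 := by
  simp [ωE, gE, fE, pderiv_mul, pderiv_pow, pderiv_X]

lemma ev2 (a₀ a₁ a₂ a₅ b₀ b₁ b₃ : ℂ) (v : Fin 4 → ℂ) :
    eval v (ωE a₀ a₁ a₂ a₅ b₀ b₁ b₃ 2) =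
      3 * ((a₀ * v 0 + a₁ * v 1 + a₂ * v 2 + v 3) * v 0 ^ 2 +
          a₅ * (b₁ * v 0 * v 1 ^ 2 + v 0 * v 1 * v 2 + (2/3) * b₃ * v 1 ^ 3)) * v 0 -
        2 * (b₀ * v 0 ^ 2 + b₁ * v 0 * v 1 + v 0 * v 2 + b₃ * v 1 ^ 2) *
          (a₂ * v 0 ^ 2 + a₅ * v 0 * v 1) := by
  simp [ωE, gE, fE, pderiv_mul, pderiv_pow, pderiv_X]
  ring_nf
  tauto

/-- On the chart `b₂ = 1`, `a₃ = 1`, the map from parameters to the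
projectivized 1-form `ω` is injective: if the 1-forms of two parameter tuples
agree up to a nonzero scalar `λ`, then the tuples coincide and `λ = 1`. Hence
the parametrization `Φ` of the exceptional component is generically
injective. -/
theorem stmt18 (a₀ a₁ a₂ a₅ b₀ b₁ b₃ a₀' a₁' a₂' a₅' b₀' b₁' b₃' lam : ℂ)
    (hlam : lam ≠ 0)
    (h : ∀ i : Fin 4,
      ωE a₀' a₁' a₂' a₅' b₀' b₁' b₃' i = C lam * ωE a₀ a₁ a₂ a₅ b₀ b₁ b₃ i) :
    (a₀ = a₀' ∧ a₁ = a₁' ∧ a₂ = a₂' ∧ a₅ = a₅' ∧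
      b₀ = b₀' ∧ b₁ = b₁' ∧ b₃ = b₃') ∧ lam = 1 := by
  have k3 : ∀ x y z w : ℂ,
      -2 * (b₀' * x ^ 2 + b₁' * x * y + x * z + b₃' * y ^ 2) * x ^ 2 =
        lam * (-2 * (b₀ * x ^ 2 + b₁ * x * y + x * z + b₃ * y ^ 2) * x ^ 2) := by
    intro x y z w
    have := congrArg (eval ![x, y, z, w]) (h 3)
    rw [eval_mul, eval_C, ev3, ev3] at this
    simpa using this
  have k2 : ∀ x y z w : ℂ,
      3 * ((a₀' * x + a₁' * y + a₂' * z + w) * x ^ 2 +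
          a₅' * (b₁' * x * y ^ 2 + x * y * z + (2/3) * b₃' * y ^ 3)) * x -
        2 * (b₀' * x ^ 2 + b₁' * x * y + x * z + b₃' * y ^ 2) *
          (a₂' * x ^ 2 + a₅' * x * y) =
      lam * (3 * ((a₀ * x + a₁ * y + a₂ * z + w) * x ^ 2 +
          a₅ * (b₁ * x * y ^ 2 + x * y * z + (2/3) * b₃ * y ^ 3)) * x -
        2 * (b₀ * x ^ 2 + b₁ * x * y + x * z + b₃ * y ^ 2) *
          (a₂ * x ^ 2 + a₅ * x * y)) := by
    intro x y z w
    have := congrArg (eval ![x, y, z, w]) (h 2)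
    rw [eval_mul, eval_C, ev2, ev2] at this
    simpa using this
  have hl : lam = 1 := by
    linear_combination (1/2 : ℂ) * k3 1 0 1 0 - (1/2 : ℂ) * k3 1 0 0 0
  subst hl
  have hb0 : b₀' = b₀ := by linear_combination (-1/2 : ℂ) * k3 1 0 0 0
  subst hb0
  have hb1 : b₁' = b₁ := by
    linear_combination (-1/4 : ℂ) * k3 1 1 0 0 + (1/4 : ℂ) * k3 1 (-1) 0 0
  subst hb1
  have hb3 : b₃' = b₃ := by
    linear_combination (-1/4 : ℂ) * k3 1 1 0 0 - (1/4 : ℂ) * k3 1 (-1) 0 0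
  subst hb3
  have ea2 : a₂' = a₂ := by linear_combination k2 1 0 1 0 - k2 1 0 0 0
  subst ea2
  have ea0 : a₀' = a₀ := by linear_combination (1/3 : ℂ) * k2 1 0 0 0
  subst ea0
  have ea5 : a₅' = a₅ := by linear_combination k2 1 1 1 0 - k2 1 1 0 0
  subst ea5
  have ea1 : a₁' = a₁ := by
    linear_combination (1/3 : ℂ) * k2 1 1 0 0 - (1/3 : ℂ) * k2 1 0 0 0
  subst ea1
  exact ⟨⟨rfl, rfl, rfl, rfl, rfl, rfl, rfl⟩, rfl⟩
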